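/- arXiv:1201.4337 — 2 statements merged into one kernel-verified Lean document; each statement's English description precedes it below -/
import Mathlib

section
/- For every u∈D(L̃₀) one has Re(L̃₀u|u) ≤ (1/2−2/(p−1))‖u‖², where (·|·) and ‖·‖ are the inner product and norm of H. -/
/-!
For `u = (u₁, u₂)` put `N = ‖u₁‖² + ‖u₂‖²` and `F(ρ) = ⟪u₁(ρ), u₂(ρ)⟫ - ρ N(ρ) / 2`. Pointwise,
`Re ⟪L̃₀u, u⟫ = F' + (1/2 - 2/(p-1)) N`, so integrating gives
`Re (L̃₀u | u) = F(1) - F(0) + (1/2 - 2/(p-1)) ‖u‖²`. The boundary condition `u₁(0) = 0` kills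
`F(0)`, and `F(1) = -‖u₁(1) - u₂(1)‖² / 2 ≤ 0`.
-/

noncomputable section
open MeasureTheory Set Real Complex

open scoped RealInnerProductSpace

theorem setIntegral_Ioo_eq_sub_of_hasDerivWithinAt_Icc {F : Type*} [NormedAddCommGroup F]
    [NormedSpace ℝ F] [CompleteSpace F] {f f' : ℝ → F} {a b : ℝ} (hab : a ≤ b)
    (hf : ∀ x ∈ Icc a b, HasDerivWithinAt f (f' x) (Icc a b) x)
    (hf' : ContinuousOn f' (Icc a b)) :
    ∫ x in Ioo a b, f' x = f b - f a := by
  rw [← integral_Ioc_eq_integral_Ioo, ← intervalIntegral.integral_of_le hab]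
  refine intervalIntegral.integral_eq_sub_of_hasDerivAt_of_le hab
    (fun x hx => (hf x hx).continuousWithinAt) (fun x hx => ?_)
    (hf'.intervalIntegrable_of_Icc hab)
  exact (hf x (Ioo_subset_Icc_self hx)).hasDerivAt (Icc_mem_nhds hx.1 hx.2)

section

variable {E : Type*} [NormedAddCommGroup E] [InnerProductSpace ℝ E]

def similarityFlux (u₁ u₂ : ℝ → E) (t : ℝ) : ℝ :=
  ⟪u₁ t, u₂ t⟫ - t / 2 * (‖u₁ t‖ ^ 2 + ‖u₂ t‖ ^ 2)

theorem similarityFlux_zero {u₁ : ℝ → E} (u₂ : ℝ → E) (h : u₁ 0 = 0) :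
    similarityFlux u₁ u₂ 0 = 0 := by
  simp [similarityFlux, h]

theorem similarityFlux_one_nonpos (u₁ u₂ : ℝ → E) : similarityFlux u₁ u₂ 1 ≤ 0 := by
  simp only [similarityFlux]
  linarith [norm_sub_sq_real (u₁ 1) (u₂ 1), sq_nonneg ‖u₁ 1 - u₂ 1‖]

theorem hasDerivWithinAt_similarityFlux {u₁ u₂ : ℝ → E} {d₁ d₂ : E} {s : Set ℝ} {x : ℝ}
    (h₁ : HasDerivWithinAt u₁ d₁ s x) (h₂ : HasDerivWithinAt u₂ d₂ s x) :
    HasDerivWithinAt (similarityFlux u₁ u₂)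
      (⟪u₁ x, d₂ - x • d₁⟫ + ⟪u₂ x, d₁ - x • d₂⟫ - (‖u₁ x‖ ^ 2 + ‖u₂ x‖ ^ 2) / 2) s x := by
  have hhalf : HasDerivWithinAt (fun t : ℝ => t / 2) (1 / 2) s x :=
    (hasDerivWithinAt_id x s).div_const 2
  refine ((h₁.inner ℝ h₂).sub (hhalf.mul (h₁.norm_sq.add h₂.norm_sq))).congr_deriv ?_
  simp only [Pi.add_apply, inner_sub_right, inner_smul_right, real_inner_comm d₁,
    real_inner_comm d₂]
  ring

theorem setIntegral_inner_similarityOperator_le (c : ℝ) {u₁ u₂ u₁' u₂' : ℝ → E}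
    (hu₁ : ∀ ρ ∈ Icc (0:ℝ) 1, HasDerivWithinAt u₁ (u₁' ρ) (Icc (0:ℝ) 1) ρ)
    (hu₂ : ∀ ρ ∈ Icc (0:ℝ) 1, HasDerivWithinAt u₂ (u₂' ρ) (Icc (0:ℝ) 1) ρ)
    (hu₁' : ContinuousOn u₁' (Icc (0:ℝ) 1)) (hu₂' : ContinuousOn u₂' (Icc (0:ℝ) 1))
    (hbc : u₁ 0 = 0) :
    ∫ ρ in Ioo (0:ℝ) 1,
        (⟪u₁ ρ, u₂' ρ - ρ • u₁' ρ - c • u₁ ρ⟫ + ⟪u₂ ρ, u₁' ρ - ρ • u₂' ρ - c • u₂ ρ⟫)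
      ≤ (1 / 2 - c) * ∫ ρ in Ioo (0:ℝ) 1, (‖u₁ ρ‖ ^ 2 + ‖u₂ ρ‖ ^ 2) := by
  have hu₁c : ContinuousOn u₁ (Icc 0 1) := fun ρ hρ => (hu₁ ρ hρ).continuousWithinAt
  have hu₂c : ContinuousOn u₂ (Icc 0 1) := fun ρ hρ => (hu₂ ρ hρ).continuousWithinAt
  have hflux := setIntegral_Ioo_eq_sub_of_hasDerivWithinAt_Icc zero_le_one
    (fun ρ hρ => hasDerivWithinAt_similarityFlux (hu₁ ρ hρ) (hu₂ ρ hρ)) (by fun_prop)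
  have hN : IntegrableOn (fun ρ => ‖u₁ ρ‖ ^ 2 + ‖u₂ ρ‖ ^ 2) (Ioo 0 1) :=
    (ContinuousOn.integrableOn_Icc (by fun_prop)).mono_set Ioo_subset_Icc_self
  have hF' : IntegrableOn (fun ρ : ℝ => ⟪u₁ ρ, u₂' ρ - ρ • u₁' ρ⟫ + ⟪u₂ ρ, u₁' ρ - ρ • u₂' ρ⟫
      - (‖u₁ ρ‖ ^ 2 + ‖u₂ ρ‖ ^ 2) / 2) (Ioo 0 1) :=
    (ContinuousOn.integrableOn_Icc (by fun_prop)).mono_set Ioo_subset_Icc_self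
  calc _ = ∫ ρ in Ioo (0:ℝ) 1, ((⟪u₁ ρ, u₂' ρ - ρ • u₁' ρ⟫ + ⟪u₂ ρ, u₁' ρ - ρ • u₂' ρ⟫
          - (‖u₁ ρ‖ ^ 2 + ‖u₂ ρ‖ ^ 2) / 2) + (1 / 2 - c) * (‖u₁ ρ‖ ^ 2 + ‖u₂ ρ‖ ^ 2)) := by
        congr 1 with ρ
        simp only [inner_sub_right, inner_smul_right, real_inner_self_eq_norm_sq]
        ring
    _ = similarityFlux u₁ u₂ 1 - similarityFlux u₁ u₂ 0
          + (1 / 2 - c) * ∫ ρ in Ioo (0:ℝ) 1, (‖u₁ ρ‖ ^ 2 + ‖u₂ ρ‖ ^ 2) := by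
        rw [integral_add hF' (hN.const_mul _), hflux, integral_const_mul]
    _ ≤ _ := by
        linarith [similarityFlux_one_nonpos u₁ u₂, similarityFlux_zero u₂ hbc]

end

theorem stmt1_general (p : ℝ)
    (u₁ u₂ u₁' u₂' : ℝ → ℂ)
    (hu₁ : ∀ ρ ∈ Icc (0:ℝ) 1, HasDerivWithinAt u₁ (u₁' ρ) (Icc (0:ℝ) 1) ρ)
    (hu₂ : ∀ ρ ∈ Icc (0:ℝ) 1, HasDerivWithinAt u₂ (u₂' ρ) (Icc (0:ℝ) 1) ρ)
    (hu₁' : ContinuousOn u₁' (Icc (0:ℝ) 1))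
    (hu₂' : ContinuousOn u₂' (Icc (0:ℝ) 1))
    (hbc : u₁ 0 = 0) :
    (∫ ρ in Ioo (0:ℝ) 1,
        ((u₂' ρ - (ρ:ℂ) * u₁' ρ - ((2/(p-1) : ℝ) : ℂ) * u₁ ρ) * (starRingEnd ℂ) (u₁ ρ)
        + (u₁' ρ - (ρ:ℂ) * u₂' ρ - ((2/(p-1) : ℝ) : ℂ) * u₂ ρ) * (starRingEnd ℂ) (u₂ ρ))).re
      ≤ (1/2 - 2/(p-1)) * ∫ ρ in Ioo (0:ℝ) 1, (‖u₁ ρ‖ ^ 2 + ‖u₂ ρ‖ ^ 2) := by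
  have hu₁c : ContinuousOn u₁ (Icc 0 1) := fun ρ hρ => (hu₁ ρ hρ).continuousWithinAt
  have hu₂c : ContinuousOn u₂ (Icc 0 1) := fun ρ hρ => (hu₂ ρ hρ).continuousWithinAt
  have hint : IntegrableOn (fun ρ : ℝ =>
      (u₂' ρ - (ρ:ℂ) * u₁' ρ - ((2/(p-1) : ℝ) : ℂ) * u₁ ρ) * (starRingEnd ℂ) (u₁ ρ)
        + (u₁' ρ - (ρ:ℂ) * u₂' ρ - ((2/(p-1) : ℝ) : ℂ) * u₂ ρ) * (starRingEnd ℂ) (u₂ ρ))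
      (Ioo 0 1) :=
    (ContinuousOn.integrableOn_Icc (by fun_prop)).mono_set Ioo_subset_Icc_self
  rw [← RCLike.re_to_complex, ← integral_re hint]
  simpa only [Complex.inner, Complex.real_smul, RCLike.re_to_complex, Complex.add_re] using
    setIntegral_inner_similarityOperator_le (2 / (p - 1)) hu₁ hu₂ hu₁' hu₂' hbc

theorem stmt1 (p : ℝ) (hp1 : 1 < p) (hp3 : p ≤ 3)
    (u₁ u₂ u₁' u₂' : ℝ → ℂ)
    (hu₁ : ∀ ρ ∈ Icc (0:ℝ) 1, HasDerivWithinAt u₁ (u₁' ρ) (Icc (0:ℝ) 1) ρ)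
    (hu₂ : ∀ ρ ∈ Icc (0:ℝ) 1, HasDerivWithinAt u₂ (u₂' ρ) (Icc (0:ℝ) 1) ρ)
    (hu₁' : ContinuousOn u₁' (Icc (0:ℝ) 1))
    (hu₂' : ContinuousOn u₂' (Icc (0:ℝ) 1))
    (hbc : u₁ 0 = 0) :
    (∫ ρ in Ioo (0:ℝ) 1,
        ((u₂' ρ - (ρ:ℂ) * u₁' ρ - ((2/(p-1) : ℝ) : ℂ) * u₁ ρ) * (starRingEnd ℂ) (u₁ ρ)
        + (u₁' ρ - (ρ:ℂ) * u₂' ρ - ((2/(p-1) : ℝ) : ℂ) * u₂ ρ) * (starRingEnd ℂ) (u₂ ρ))).re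
      ≤ (1/2 - 2/(p-1)) * ∫ ρ in Ioo (0:ℝ) 1, (‖u₁ ρ‖ ^ 2 + ‖u₂ ρ‖ ^ 2) :=
  stmt1_general p u₁ u₂ u₁' u₂' hu₁ hu₂ hu₁' hu₂' hbc
end
end

section
/- Fix p with 1<p≤3. Every weak solution h∈H²_loc(0,1) of the ordinary differential equation −(1−ρ²)h''(ρ)+(2(p+1)/(p−1))ρh'(ρ)−(2(p+1)/(p−1))h(ρ)=0 on (0,1) that extends continuously to [0,1] is a constant multiple of h₀(ρ)=ρ. (Indeed a second, linearly independent solution has the form h₁(ρ)=(1−ρ²)^{−2/(p−1)}·h̃₁(ρ) with h̃₁ continuous on [0,1] and h̃₁(1)≠0, hence is unbounded near ρ=1.) -/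
/-!
Write `κ = 2(p+1)/(p-1)`. Because `h'` is the primitive of an `L²_loc` function it is continuous,
so the equation gives `h'' = κ (ρ h' - h)/(1 - ρ²)` almost everywhere with a continuous right-hand
side, and `h` is a classical solution. The Wronskian `W = ρ h' - h` of `h` with `h₀ = ρ` then
satisfies `W' = κ ρ W/(1 - ρ²)`, so `W (1 - ρ²)^(κ/2)` is a constant `C` (Abel's identity).
If `C ≠ 0`, then `(C h/ρ)' = C W/ρ² ≥ C²/(2(1 - ρ))` since `κ/2 ≥ 1`, so `C h/ρ` grows like
`-log (1 - ρ)` and `h` cannot be continuous at `1`. Hence `W = 0`, that is, `h/ρ` is constant.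
-/

open MeasureTheory Set Real Filter Topology

section Primitive

variable {g g' G : ℝ → ℝ} {a b : ℝ}

theorem locallyIntegrableOn_Ioo_of_memLp {p : ENNReal} (hp : 1 ≤ p)
    (hg : ∀ a' b', a < a' → b' < b → MemLp g p (volume.restrict (Ioo a' b'))) :
    LocallyIntegrableOn g (Ioo a b) := by
  intro x hx
  refine ⟨Ioo ((a + x) / 2) ((x + b) / 2), mem_nhdsWithin_of_mem_nhds ?_, ?_⟩
  · exact Ioo_mem_nhds (by linarith [hx.1]) (by linarith [hx.2])
  · exact (hg _ _ (by linarith [hx.1]) (by linarith [hx.2])).integrable hp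

theorem continuousOn_of_eq_add_integral
    (hprim : ∀ x₀ ∈ Ioo a b, ∀ x ∈ Ioo a b, g x = g x₀ + ∫ s in x₀..x, g' s)
    (hg' : LocallyIntegrableOn g' (Ioo a b)) : ContinuousOn g (Ioo a b) := by
  intro x hx
  have hc : (a + x) / 2 < x := by linarith [hx.1]
  have hd : x < (x + b) / 2 := by linarith [hx.2]
  have hIcc : uIcc ((a + x) / 2) ((x + b) / 2) = Icc ((a + x) / 2) ((x + b) / 2) :=
    uIcc_of_le (by linarith)
  have hsub : uIcc ((a + x) / 2) ((x + b) / 2) ⊆ Ioo a b := by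
    rw [hIcc]
    exact Icc_subset_Ioo (by linarith [hx.1]) (by linarith [hx.2])
  have hprim_cont :
      ContinuousOn (fun y => ∫ s in x..y, g' s) (uIcc ((a + x) / 2) ((x + b) / 2)) :=
    intervalIntegral.continuousOn_primitive_interval'
      (hg'.integrableOn_compact_subset hsub isCompact_uIcc).intervalIntegrable
      (by rw [hIcc]; exact ⟨hc.le, hd.le⟩)
  have hcont : ContinuousAt (fun y => g x + ∫ s in x..y, g' s) x :=
    continuousAt_const.add (hprim_cont.continuousAt (by rw [hIcc]; exact Icc_mem_nhds hc hd))
  refine (hcont.congr ?_).continuousWithinAt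
  filter_upwards [Ioo_mem_nhds hx.1 hx.2] with y hy
  exact (hprim x hx y hy).symm

theorem hasDerivAt_of_eq_add_integral
    (hprim : ∀ x₀ ∈ Ioo a b, ∀ x ∈ Ioo a b, g x = g x₀ + ∫ s in x₀..x, g' s)
    (hae : ∀ᵐ x ∂volume.restrict (Ioo a b), g' x = G x) (hG : ContinuousOn G (Ioo a b))
    {x : ℝ} (hx : x ∈ Ioo a b) : HasDerivAt g (G x) x := by
  have hae' : ∀ᵐ t, t ∈ Ioo a b → g' t = G t := (ae_restrict_iff' measurableSet_Ioo).1 hae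
  have hFTC : HasDerivAt (fun y => g x + ∫ s in x..y, G s) (G x) x :=
    (intervalIntegral.integral_hasDerivAt_right IntervalIntegrable.refl
      (hG.stronglyMeasurableAtFilter isOpen_Ioo x hx)
      (hG.continuousAt (Ioo_mem_nhds hx.1 hx.2))).const_add _
  refine hFTC.congr_of_eventuallyEq ?_
  filter_upwards [Ioo_mem_nhds hx.1 hx.2] with y hy
  rw [hprim x hx y hy]
  congr 1
  refine intervalIntegral.integral_congr_ae ?_
  filter_upwards [hae'] with t ht hmem
  exact ht ⟨(lt_min hx.1 hy.1).trans_le hmem.1.le, hmem.2.trans_lt (max_lt hx.2 hy.2)⟩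

end Primitive

theorem tendsto_atTop_of_div_one_sub_le_deriv {f f' : ℝ → ℝ} {a c : ℝ} (ha : a < 1)
    (hc : 0 < c) (hf : ∀ x ∈ Ioo a 1, HasDerivAt f (f' x) x)
    (hf' : ∀ x ∈ Ioo a 1, c / (1 - x) ≤ f' x) :
    Tendsto f (𝓝[<] 1) atTop := by
  obtain ⟨x₀, hax₀, hx₀⟩ := exists_between ha
  have hsub : Ico x₀ 1 ⊆ Ioo a 1 := fun y hy => ⟨hax₀.trans_le hy.1, hy.2⟩
  have hlog : ∀ x ∈ Ioo a 1, HasDerivAt (fun y => c * log (1 - y)) (-(c / (1 - x))) x :=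
    fun x hx => ((((hasDerivAt_id' x).const_sub 1).log (sub_ne_zero.2 hx.2.ne')).const_mul
      c).congr_deriv (by ring)
  have hderiv : ∀ x ∈ Ioo a 1,
      HasDerivAt (fun y => f y + c * log (1 - y)) (f' x - c / (1 - x)) x :=
    fun x hx => ((hf x hx).add (hlog x hx)).congr_deriv (sub_eq_add_neg _ _).symm
  have hmono : MonotoneOn (fun x => f x + c * log (1 - x)) (Ico x₀ 1) := by
    refine monotoneOn_of_hasDerivWithinAt_nonneg (f' := fun y => f' y - c / (1 - y))
      (convex_Ico _ _)
      (fun y hy => (hderiv y (hsub hy)).continuousAt.continuousWithinAt)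
      (fun y hy => ?_) (fun y hy => ?_)
    · rw [interior_Ico] at hy
      exact (hderiv y (hsub (Ioo_subset_Ico_self hy))).hasDerivWithinAt
    · rw [interior_Ico] at hy
      exact sub_nonneg.2 (hf' y (hsub (Ioo_subset_Ico_self hy)))
  have hlog_tendsto : Tendsto (fun x => -(c * log (1 - x))) (𝓝[<] 1) atTop := by
    have hsub_tendsto : Tendsto (fun x : ℝ => 1 - x) (𝓝[<] 1) (𝓝[>] 0) := by
      refine tendsto_nhdsWithin_of_tendsto_nhds_of_eventually_within _ ?_ ?_
      · simpa using ((continuous_sub_left (1 : ℝ)).tendsto 1).mono_left nhdsWithin_le_nhds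
      · filter_upwards [self_mem_nhdsWithin] with x hx
        exact sub_pos.2 (mem_Iio.1 hx)
    exact tendsto_neg_atBot_atTop.comp
      ((tendsto_log_nhdsGT_zero.comp hsub_tendsto).const_mul_atBot hc)
  refine tendsto_atTop_mono' _ ?_
    (tendsto_atTop_add_const_left _ (f x₀ + c * log (1 - x₀)) hlog_tendsto)
  filter_upwards [Ico_mem_nhdsLT hx₀] with x hx
  have := hmono ⟨le_rfl, hx₀⟩ hx hx.1
  simp only at this
  linarith

theorem one_sub_sq_pos {ρ : ℝ} (hρ : ρ ∈ Ioo (0 : ℝ) 1) : 0 < 1 - ρ ^ 2 := by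
  nlinarith [hρ.1, hρ.2]

theorem sq_mul_one_sub_sq_rpow_le {ρ s : ℝ} (hρ : ρ ∈ Ioo 0 1) (hs : 1 ≤ s) :
    ρ ^ 2 * (1 - ρ ^ 2) ^ s ≤ 2 * (1 - ρ) := by
  have h0 := one_sub_sq_pos hρ
  have hpow : (1 - ρ ^ 2) ^ s ≤ 1 - ρ ^ 2 := by
    simpa using rpow_le_rpow_of_exponent_ge h0 (by nlinarith [hρ.1]) hs
  calc ρ ^ 2 * (1 - ρ ^ 2) ^ s ≤ 1 * (1 - ρ ^ 2) :=
        mul_le_mul (by nlinarith [hρ.1, hρ.2]) hpow (rpow_nonneg h0.le s) zero_le_one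
    _ ≤ 2 * (1 - ρ) := by nlinarith [hρ.1, hρ.2]

theorem hasDerivAt_mul_one_sub_sq_rpow {W : ℝ → ℝ} {κ ρ : ℝ} (hρ : 0 < 1 - ρ ^ 2)
    (hW : HasDerivAt W (κ * ρ * W ρ / (1 - ρ ^ 2)) ρ) :
    HasDerivAt (fun x => W x * (1 - x ^ 2) ^ (κ / 2)) 0 ρ := by
  have hG := ((hasDerivAt_pow 2 ρ).const_sub 1).rpow_const (p := κ / 2) (Or.inl hρ.ne')
  refine (hW.mul hG).congr_deriv ?_
  rw [rpow_sub_one hρ.ne']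
  field_simp
  ring

section Wronskian

variable {κ : ℝ} {h h' h'' : ℝ → ℝ}

theorem hasDerivAt_deriv_of_ae_ode
    (hder : ∀ ρ ∈ Ioo (0 : ℝ) 1, HasDerivAt h (h' ρ) ρ)
    (hloc : LocallyIntegrableOn h'' (Ioo 0 1))
    (hprim : ∀ ρ₀ ∈ Ioo (0 : ℝ) 1, ∀ ρ ∈ Ioo (0 : ℝ) 1, h' ρ = h' ρ₀ + ∫ s in ρ₀..ρ, h'' s)
    (hode : ∀ᵐ ρ ∂(volume.restrict (Ioo (0 : ℝ) 1)),
      -(1 - ρ ^ 2) * h'' ρ + κ * ρ * h' ρ - κ * h ρ = 0)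
    {ρ : ℝ} (hρ : ρ ∈ Ioo (0 : ℝ) 1) :
    HasDerivAt h' (κ * (ρ * h' ρ - h ρ) / (1 - ρ ^ 2)) ρ := by
  refine hasDerivAt_of_eq_add_integral (G := fun ρ => κ * (ρ * h' ρ - h ρ) / (1 - ρ ^ 2))
    hprim ?_ ?_ hρ
  · filter_upwards [hode, ae_restrict_mem measurableSet_Ioo] with x hx hxI
    field_simp [(one_sub_sq_pos hxI).ne']
    linarith
  · have hh : ContinuousOn h (Ioo 0 1) := fun x hx =>
      (hder x hx).continuousAt.continuousWithinAt
    have hh' := continuousOn_of_eq_add_integral hprim hloc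
    exact (continuousOn_const.mul ((continuousOn_id.mul hh').sub hh)).div (by fun_prop)
      fun x hx => (one_sub_sq_pos hx).ne'

theorem exists_wronskian_mul_rpow_eq
    (hder : ∀ ρ ∈ Ioo (0 : ℝ) 1, HasDerivAt h (h' ρ) ρ)
    (hder' : ∀ ρ ∈ Ioo (0 : ℝ) 1, HasDerivAt h' (κ * (ρ * h' ρ - h ρ) / (1 - ρ ^ 2)) ρ) :
    ∃ C, ∀ ρ ∈ Ioo (0 : ℝ) 1, (ρ * h' ρ - h ρ) * (1 - ρ ^ 2) ^ (κ / 2) = C := by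
  have hF : ∀ ρ ∈ Ioo (0 : ℝ) 1,
      HasDerivAt (fun x => (x * h' x - h x) * (1 - x ^ 2) ^ (κ / 2)) 0 ρ := fun ρ hρ =>
    hasDerivAt_mul_one_sub_sq_rpow (one_sub_sq_pos hρ)
      ((((hasDerivAt_id' ρ).mul (hder' ρ hρ)).sub (hder ρ hρ)).congr_deriv (by ring))
  exact isOpen_Ioo.exists_is_const_of_deriv_eq_zero isPreconnected_Ioo
    (fun ρ hρ => (hF ρ hρ).differentiableAt.differentiableWithinAt) fun ρ hρ => (hF ρ hρ).deriv

theorem tendsto_mul_div_atTop_of_wronskian_mul_rpow_eq {C : ℝ} (hκ : 2 ≤ κ) (hC : C ≠ 0)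
    (hder : ∀ ρ ∈ Ioo (0 : ℝ) 1, HasDerivAt h (h' ρ) ρ)
    (hW : ∀ ρ ∈ Ioo (0 : ℝ) 1, (ρ * h' ρ - h ρ) * (1 - ρ ^ 2) ^ (κ / 2) = C) :
    Tendsto (fun ρ => C * (h ρ / ρ)) (𝓝[<] 1) atTop := by
  refine tendsto_atTop_of_div_one_sub_le_deriv (c := C ^ 2 / 2) zero_lt_one (by positivity)
    (fun ρ hρ => ((hder ρ hρ).div (hasDerivAt_id' ρ) hρ.1.ne').const_mul C) fun ρ hρ => ?_
  have hG : 0 < (1 - ρ ^ 2) ^ (κ / 2) := rpow_pos_of_pos (one_sub_sq_pos hρ) _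
  have hWρ : h' ρ * ρ - h ρ * 1 = C / (1 - ρ ^ 2) ^ (κ / 2) := by
    rw [eq_div_iff hG.ne', ← hW ρ hρ]; ring
  calc C ^ 2 / 2 / (1 - ρ) = C ^ 2 / (2 * (1 - ρ)) := div_div _ _ _
    _ ≤ C ^ 2 / (ρ ^ 2 * (1 - ρ ^ 2) ^ (κ / 2)) :=
        div_le_div_of_nonneg_left (sq_nonneg C) (mul_pos (pow_pos hρ.1 2) hG)
          (sq_mul_one_sub_sq_rpow_le hρ (by linarith))
    _ = C * ((h' ρ * ρ - h ρ * 1) / ρ ^ 2) := by rw [hWρ]; field_simp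

theorem exists_eq_mul_of_wronskian_eq_zero (hcont : ContinuousOn h (Icc 0 1))
    (hder : ∀ ρ ∈ Ioo (0 : ℝ) 1, HasDerivAt h (h' ρ) ρ)
    (hW : ∀ ρ ∈ Ioo (0 : ℝ) 1, ρ * h' ρ - h ρ = 0) :
    ∃ c, ∀ ρ ∈ Icc (0 : ℝ) 1, h ρ = c * ρ := by
  have hv : ∀ ρ ∈ Ioo (0 : ℝ) 1, HasDerivAt (fun x => h x / x) 0 ρ := fun ρ hρ =>
    ((hder ρ hρ).div (hasDerivAt_id' ρ) hρ.1.ne').congr_deriv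
      (by rw [mul_one, mul_comm, hW ρ hρ, zero_div])
  obtain ⟨c, hc⟩ := isOpen_Ioo.exists_is_const_of_deriv_eq_zero isPreconnected_Ioo
    (fun ρ hρ => (hv ρ hρ).differentiableAt.differentiableWithinAt) fun ρ hρ => (hv ρ hρ).deriv
  refine ⟨c, EqOn.of_subset_closure (fun ρ hρ => ?_) hcont (by fun_prop) Ioo_subset_Icc_self
    (closure_Ioo zero_ne_one).ge⟩
  rw [← hc ρ hρ, div_mul_cancel₀ _ hρ.1.ne']

end Wronskian

theorem stmt8_general (p : ℝ) (hp1 : 1 < p)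
    (h h' h'' : ℝ → ℝ)
    (hcont : ContinuousOn h (Icc (0:ℝ) 1))
    (hder : ∀ ρ ∈ Ioo (0:ℝ) 1, HasDerivAt h (h' ρ) ρ)
    (hL2loc : ∀ a b : ℝ, 0 < a → b < 1 → MemLp h'' 2 (volume.restrict (Ioo a b)))
    (hAC : ∀ ρ₀ ∈ Ioo (0:ℝ) 1, ∀ ρ ∈ Ioo (0:ℝ) 1,
      h' ρ = h' ρ₀ + ∫ s in ρ₀..ρ, h'' s)
    (hode : ∀ᵐ ρ ∂(volume.restrict (Ioo (0:ℝ) 1)),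
      -(1 - ρ ^ 2) * h'' ρ + (2 * (p + 1) / (p - 1)) * ρ * h' ρ
        - (2 * (p + 1) / (p - 1)) * h ρ = 0) :
    ∃ c : ℝ, ∀ ρ ∈ Icc (0:ℝ) 1, h ρ = c * ρ := by
  have hκ : 2 ≤ 2 * (p + 1) / (p - 1) := by
    rw [le_div_iff₀ (by linarith)]; linarith
  have hder' : ∀ ρ ∈ Ioo (0:ℝ) 1, HasDerivAt h' _ ρ := fun ρ hρ =>
    hasDerivAt_deriv_of_ae_ode hder (locallyIntegrableOn_Ioo_of_memLp one_le_two hL2loc) hAC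
      hode hρ
  obtain ⟨C, hW⟩ := exists_wronskian_mul_rpow_eq hder hder'
  have hC : C = 0 := by
    by_contra hC
    have hlim : Tendsto (fun ρ => C * (h ρ / ρ)) (𝓝[<] 1) (𝓝 (C * (h 1 / 1))) :=
      (((hcont 1 ⟨zero_le_one, le_rfl⟩).mono_of_mem_nhdsWithin
        (Icc_mem_nhdsLT zero_lt_one)).div continuousWithinAt_id one_ne_zero).const_mul C
    exact not_tendsto_atTop_of_tendsto_nhds hlim
      (tendsto_mul_div_atTop_of_wronskian_mul_rpow_eq hκ hC hder hW)
  refine exists_eq_mul_of_wronskian_eq_zero hcont hder fun ρ hρ => ?_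
  have hG : (1 - ρ ^ 2) ^ (2 * (p + 1) / (p - 1) / 2) ≠ 0 :=
    (rpow_pos_of_pos (one_sub_sq_pos hρ) _).ne'
  exact (mul_eq_zero.1 ((hW ρ hρ).trans hC)).resolve_right hG

theorem stmt8 (p : ℝ) (hp1 : 1 < p) (hp3 : p ≤ 3)
    (h h' h'' : ℝ → ℝ)
    (hcont : ContinuousOn h (Icc (0:ℝ) 1))
    (hder : ∀ ρ ∈ Ioo (0:ℝ) 1, HasDerivAt h (h' ρ) ρ)
    (hL2loc : ∀ a b : ℝ, 0 < a → b < 1 → MemLp h'' 2 (volume.restrict (Ioo a b)))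
    (hAC : ∀ ρ₀ ∈ Ioo (0:ℝ) 1, ∀ ρ ∈ Ioo (0:ℝ) 1,
      h' ρ = h' ρ₀ + ∫ s in ρ₀..ρ, h'' s)
    (hode : ∀ᵐ ρ ∂(volume.restrict (Ioo (0:ℝ) 1)),
      -(1 - ρ ^ 2) * h'' ρ + (2 * (p + 1) / (p - 1)) * ρ * h' ρ
        - (2 * (p + 1) / (p - 1)) * h ρ = 0) :
    ∃ c : ℝ, ∀ ρ ∈ Icc (0:ℝ) 1, h ρ = c * ρ :=
  stmt8_general p hp1 h h' h'' hcont hder hL2loc hAC hode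
end
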